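/- With Y as defined (Y = Y₁ ⊗ (|0⟩⟨0|+|1⟩⟨1|) + Y₂ ⊗ |2⟩⟨2| + ((1+cos²α)/cos²α)(|00⟩⟨22|+|22⟩⟨00|), Y₁ = ((1+cos²α)/cos²α)|0⟩⟨0| + (1+cos²α)|1⟩⟨1|, Y₂ = (2−sec²α)|0⟩⟨0| + (sec²α−sin²α)|1⟩⟨1| + (1+cos²α)sec²α|2⟩⟨2|), one has tr_A Y = (2 + cos²α + sec²α) I₃ for all 0 < α ≤ π/4, and hence ‖tr_A Y‖_∞ = 2 + cos²α + sec²α. -/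

import Mathlib

open Matrix Kronecker Complex ComplexOrder

noncomputable section

abbrev M3 : Type := Matrix (Fin 3) (Fin 3) ℂ
abbrev M9 : Type := Matrix (Fin 3 × Fin 3) (Fin 3 × Fin 3) ℂ

/-- |i⟩⟨j| on ℂ³ -/
def ket (i j : Fin 3) : M3 := Matrix.single i j 1

def E (α : ℝ) : M3 := (Real.sin α : ℂ) • ket 0 1 + ket 1 2
def D (α : ℝ) : M3 := (Real.cos α : ℂ) • ket 2 1 + ket 1 0

def u (α : ℝ) : Fin 3 × Fin 3 → ℂ := fun p =>
  (((if p = (1,0) then Real.sin α else 0) + (if p = (2,1) then 1 else 0)) /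
    Real.sqrt (1 + Real.sin α ^ 2) : ℝ)

def v (α : ℝ) : Fin 3 × Fin 3 → ℂ := fun p =>
  (((if p = (1,2) then Real.cos α else 0) + (if p = (0,1) then 1 else 0)) /
    Real.sqrt (1 + Real.cos α ^ 2) : ℝ)

/-- Projection onto span{|u_α⟩, |v_α⟩}, the support of the Choi matrix of N_α. -/
def Pproj (α : ℝ) : M9 :=
  vecMulVec (u α) (star (u α)) + vecMulVec (v α) (star (v α))

/-- Partial trace over the first (A) factor. -/
def trA (M : M9) : M3 := fun i j => ∑ k, M (k, i) (k, j)

/-- Partial trace over the second (B) factor. -/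
def trB (M : M9) : M3 := fun i j => ∑ k, M (i, k) (j, k)

def opNorm (M : M3) : ℝ := ‖LinearMap.toContinuousLinearMap (Matrix.toEuclideanLin M)‖

def Y1 (α : ℝ) : M3 :=
  (((1 + Real.cos α ^ 2) / Real.cos α ^ 2 : ℝ) : ℂ) • ket 0 0 +
  ((1 + Real.cos α ^ 2 : ℝ) : ℂ) • ket 1 1

def Y2 (α : ℝ) : M3 :=
  ((2 - 1 / Real.cos α ^ 2 : ℝ) : ℂ) • ket 0 0 +
  ((1 / Real.cos α ^ 2 - Real.sin α ^ 2 : ℝ) : ℂ) • ket 1 1 +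
  (((1 + Real.cos α ^ 2) / Real.cos α ^ 2 : ℝ) : ℂ) • ket 2 2

def Y3 : M9 := ket 0 2 ⊗ₖ ket 0 2 + ket 2 0 ⊗ₖ ket 2 0

def Ymat (α : ℝ) : M9 :=
  Y1 α ⊗ₖ (ket 0 0 + ket 1 1) + Y2 α ⊗ₖ ket 2 2 +
  (((1 + Real.cos α ^ 2) / Real.cos α ^ 2 : ℝ) : ℂ) • Y3


/-! Since tr_A (A ⊗ B) = (tr A) B, the traceless off-diagonal part Y₃ drops out and
tr_A Y = tr Y₁ (|0⟩⟨0| + |1⟩⟨1|) + tr Y₂ |2⟩⟨2|; both traces equal 2 + cos²α + sec²α, the second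
one after sin²α = 1 - cos²α. -/

theorem trA_add (M N : M9) : trA (M + N) = trA M + trA N := by
  ext i j
  simp only [trA, Matrix.add_apply, Finset.sum_add_distrib]

theorem trA_smul (c : ℂ) (M : M9) : trA (c • M) = c • trA M := by
  ext i j
  simp only [trA, Matrix.smul_apply, smul_eq_mul, Finset.mul_sum]

theorem trA_kronecker (A B : M3) : trA (A ⊗ₖ B) = A.trace • B := by
  ext i j
  simp only [trA, kroneckerMap_apply, Matrix.smul_apply, smul_eq_mul, trace, diag, Finset.sum_mul]

theorem trace_ket (i j : Fin 3) : (ket i j).trace = if i = j then 1 else 0 := by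
  split_ifs with h
  · subst h; exact trace_single_eq_same _ _
  · exact trace_single_eq_of_ne _ _ _ h

theorem trA_Y3 : trA Y3 = 0 := by
  simp [Y3, trA_add, trA_kronecker, trace_ket]

theorem ket_diag_sum_eq_one : ket 0 0 + ket 1 1 + ket 2 2 = 1 := by
  ext i j
  fin_cases i <;> fin_cases j <;> simp [ket, one_apply]

section

variable {α : ℝ} (hc : Real.cos α ≠ 0)
include hc

theorem trace_Y1 : (Y1 α).trace = ((2 + Real.cos α ^ 2 + 1 / Real.cos α ^ 2 : ℝ) : ℂ) := by
  simp only [Y1, trace_add, trace_smul, trace_ket, if_true, smul_eq_mul, mul_one]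
  rw [← ofReal_add]
  congr 1
  field_simp
  ring

theorem trace_Y2 : (Y2 α).trace = ((2 + Real.cos α ^ 2 + 1 / Real.cos α ^ 2 : ℝ) : ℂ) := by
  simp only [Y2, trace_add, trace_smul, trace_ket, if_true, smul_eq_mul, mul_one]
  rw [← ofReal_add, ← ofReal_add, Real.sin_sq]
  congr 1
  field_simp
  ring

end

theorem trA_Ymat {α : ℝ} (hc : Real.cos α ≠ 0) :
    trA (Ymat α) = ((2 + Real.cos α ^ 2 + 1 / Real.cos α ^ 2 : ℝ) : ℂ) • (1 : M3) := by
  rw [Ymat, trA_add, trA_add, trA_smul, trA_kronecker, trA_kronecker, trA_Y3, trace_Y1 hc,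
    trace_Y2 hc, smul_zero, add_zero, ← smul_add, ket_diag_sum_eq_one]

theorem opNorm_smul_one (c : ℂ) : opNorm (c • 1) = ‖c‖ := by
  have : LinearMap.toContinuousLinearMap (toEuclideanLin (c • 1 : M3)) =
      c • ContinuousLinearMap.id ℂ (EuclideanSpace ℂ (Fin 3)) := by
    ext x : 1
    simp
  rw [opNorm, this, norm_smul, ContinuousLinearMap.norm_id, mul_one]

theorem lovasz_dual_partial_trace (α : ℝ) (hα : 0 < α) (hα' : α ≤ Real.pi / 4) :
    trA (Ymat α) = ((2 + Real.cos α ^ 2 + 1 / Real.cos α ^ 2 : ℝ) : ℂ) • (1 : M3) ∧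
    opNorm (trA (Ymat α)) = 2 + Real.cos α ^ 2 + 1 / Real.cos α ^ 2 := by
  have hc : Real.cos α ≠ 0 :=
    (Real.cos_pos_of_mem_Ioo ⟨by linarith [Real.pi_pos], by linarith [Real.pi_pos]⟩).ne'
  refine ⟨trA_Ymat hc, ?_⟩
  rw [trA_Ymat hc, opNorm_smul_one, Complex.norm_real, Real.norm_of_nonneg (by positivity)]
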